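/- arXiv:1505.01055 — 3 statements merged into one kernel-verified Lean document; each statement's English description precedes it below -/
import Mathlib

section
/- Let p be an odd prime and let f ∈ ℤ[x] be the minimal polynomial of 2·cos(2π/p) over ℚ (which has integer coefficients). Then the reduction of f modulo p equals (x − 2)^{(p−1)/2} in 𝔽_p[x]; in particular f mod p is not separable for p ≥ 5. -/
/-!
Write `J_m c = X ^ m * c (X + X⁻¹)` for polynomials `c` of degree at most `m`, and let `p = 2m + 1`,
`ζ` a primitive `p`-th root of unity, `α = ζ + ζ⁻¹`. Since `J_{deg f} f` vanishes at `ζ`, the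
cyclotomic polynomial `Φ_p` divides it, so `2 deg f ≥ p - 1`; conversely
`1 + ζ + ⋯ + ζ ^ 2m = 0` makes `α` a root of `1 + D_1 + ⋯ + D_m` (Dickson polynomials), so
`deg f = m` and `J_m f = Φ_p`. Modulo `p`, `Φ_p = (X - 1) ^ 2m = J_m ((X - 2) ^ m)` because
`(X - 1) ^ 2 = X * ((X + X⁻¹) - 2)`, and `J_m` is injective on polynomials of degree `≤ m`.
-/

open Polynomial Finset

theorem pow_mul_one_add_sum_pow_add_inv_pow {K : Type*} [Field K] {x : K} (hx : x ≠ 0) :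
    ∀ m : ℕ, x ^ m * (1 + ∑ k ∈ range m, (x ^ (k + 1) + x⁻¹ ^ (k + 1))) =
      ∑ i ∈ range (2 * m + 1), x ^ i
  | 0 => by simp
  | m + 1 => by
    have hshift : ∑ i ∈ range (2 * (m + 1) + 1), x ^ i =
        x * ∑ i ∈ range (2 * m + 1), x ^ i + x ^ (2 * m + 2) + 1 := by
      rw [show 2 * (m + 1) + 1 = 2 * m + 1 + 1 + 1 by ring, sum_range_succ', sum_range_succ,
        mul_sum]
      simp only [pow_succ', pow_zero]
    have hinv : x ^ (m + 1) * x⁻¹ ^ (m + 1) = 1 := by rw [← mul_pow, mul_inv_cancel₀ hx, one_pow]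
    rw [hshift, ← pow_mul_one_add_sum_pow_add_inv_pow hx m, sum_range_succ]
    linear_combination hinv

namespace Polynomial

theorem natDegree_dickson_le {R : Type*} [CommRing R] (k : ℕ) (a : R) :
    ∀ n : ℕ, (dickson k a n).natDegree ≤ n
  | 0 => by rw [dickson_zero]; compute_degree
  | 1 => by rw [dickson_one]; exact natDegree_X_le
  | n + 2 => by
    rw [dickson_add_two]
    refine (natDegree_sub_le _ _).trans (max_le ?_ ?_)
    · exact natDegree_mul_le_of_le natDegree_X_le (natDegree_dickson_le k a (n + 1)) |>.trans
        (by omega)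
    · exact (natDegree_C_mul_le _ _).trans ((natDegree_dickson_le k a n).trans (by omega))

theorem cyclotomic_prime_eq_X_sub_one_pow (R : Type*) [Ring R] (p : ℕ) [Fact p.Prime]
    [CharP R p] : cyclotomic p R = (X - 1) ^ (p - 1) := by
  simpa using cyclotomic_mul_prime_eq_pow_of_not_dvd R (n := 1) (p := p)
    (Nat.Prime.not_dvd_one Fact.out)

section Joukowski

variable {R : Type*} [CommRing R]

/-- `joukowski m c = X ^ m * c (X + X⁻¹)`, which is a polynomial as soon as `c.natDegree ≤ m`. -/
noncomputable def joukowski (m : ℕ) (c : R[X]) : R[X] :=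
  ∑ i ∈ range (m + 1), C (c.coeff i) * (X ^ 2 + 1) ^ i * X ^ (m - i)

theorem joukowski_sub (m : ℕ) (c d : R[X]) :
    joukowski m (c - d) = joukowski m c - joukowski m d := by
  simp only [joukowski, ← sum_sub_distrib, coeff_sub, map_sub, sub_mul]

theorem map_joukowski {S : Type*} [CommRing S] (φ : R →+* S) (m : ℕ) (c : R[X]) :
    (joukowski m c).map φ = joukowski m (c.map φ) := by
  simp [joukowski, Polynomial.map_sum]

theorem natDegree_joukowski_le (m : ℕ) (c : R[X]) : (joukowski m c).natDegree ≤ 2 * m := by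
  refine natDegree_sum_le_of_forall_le _ _ fun i hi ↦ ?_
  have hi : i ≤ m := Nat.lt_succ_iff.mp (mem_range.mp hi)
  have hsq : ((X : R[X]) ^ 2 + 1).natDegree ≤ 2 := by compute_degree
  calc (C (c.coeff i) * (X ^ 2 + 1) ^ i * X ^ (m - i)).natDegree
      ≤ 0 + i * 2 + (m - i) := by
        refine natDegree_mul_le_of_le (natDegree_mul_le_of_le (natDegree_C _).le ?_)
          (natDegree_X_pow_le _)
        exact natDegree_pow_le_of_le i hsq
    _ ≤ 2 * m := by omega

theorem coeff_joukowski_add_natDegree [Nontrivial R] {m : ℕ} {c : R[X]} (hc : c.natDegree ≤ m) :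
    (joukowski m c).coeff (m + c.natDegree) = c.leadingCoeff := by
  have hsq : ((X : R[X]) ^ 2 + 1).Monic := by monicity!
  have hsq_deg : ((X : R[X]) ^ 2 + 1).natDegree = 2 := by compute_degree!
  rw [joukowski, finsetSum_coeff, sum_eq_single c.natDegree]
  · rw [mul_assoc, coeff_C_mul, coeff_mul_X_pow', if_pos (by omega),
      show m + c.natDegree - (m - c.natDegree) = 2 * c.natDegree by omega]
    have hpow_deg : ((X ^ 2 + 1 : R[X]) ^ c.natDegree).natDegree = 2 * c.natDegree := by
      rw [hsq.natDegree_pow, hsq_deg, mul_comm]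
    rw [← hpow_deg, (hsq.pow _).coeff_natDegree, mul_one]
    rfl
  · intro i hi hne
    rw [mul_assoc, coeff_C_mul]
    rcases lt_or_gt_of_ne hne with hlt | hgt
    · have hlt' : ((X ^ 2 + 1 : R[X]) ^ i).natDegree < m + c.natDegree - (m - i) := by
        rw [hsq.natDegree_pow, hsq_deg]
        omega
      rw [coeff_mul_X_pow', if_pos (by omega), coeff_eq_zero_of_natDegree_lt hlt', mul_zero]
    · rw [coeff_eq_zero_of_natDegree_lt hgt, zero_mul]
  · exact fun h ↦ absurd (mem_range.mpr (by omega)) h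

theorem eq_of_joukowski_eq [Nontrivial R] {m : ℕ} {c d : R[X]} (hc : c.natDegree ≤ m)
    (hd : d.natDegree ≤ m) (h : joukowski m c = joukowski m d) : c = d := by
  have hcd : (c - d).natDegree ≤ m := (natDegree_sub_le c d).trans (max_le hc hd)
  have hzero := coeff_joukowski_add_natDegree hcd
  rw [joukowski_sub, h, sub_self, coeff_zero, eq_comm, leadingCoeff_eq_zero] at hzero
  exact sub_eq_zero.mp hzero

theorem Monic.joukowski {c : R[X]} (hc : c.Monic) :
    (Polynomial.joukowski c.natDegree c).Monic := by
  nontriviality R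
  refine monic_of_natDegree_le_of_coeff_eq_one _ (natDegree_joukowski_le _ c) ?_
  rw [two_mul, coeff_joukowski_add_natDegree le_rfl, hc.leadingCoeff]

theorem Monic.natDegree_joukowski [Nontrivial R] {c : R[X]} (hc : c.Monic) :
    (Polynomial.joukowski c.natDegree c).natDegree = 2 * c.natDegree := by
  refine (natDegree_joukowski_le _ c).antisymm (le_natDegree_of_ne_zero ?_)
  rw [two_mul, coeff_joukowski_add_natDegree le_rfl, hc.leadingCoeff]
  exact one_ne_zero

theorem aeval_joukowski {K : Type*} [Field K] [Algebra R K] {x : K} (hx : x ≠ 0) {m : ℕ}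
    {c : R[X]} (hc : c.natDegree ≤ m) :
    aeval x (joukowski m c) = x ^ m * aeval (x + x⁻¹) c := by
  rw [aeval_eq_sum_range' (Nat.lt_succ_of_le hc), mul_sum, joukowski, map_sum]
  refine sum_congr rfl fun i hi ↦ ?_
  have hi : i ≤ m := Nat.lt_succ_iff.mp (mem_range.mp hi)
  have hsq : x ^ 2 + 1 = x * (x + x⁻¹) := by field_simp
  simp only [map_mul, map_pow, map_add, aeval_C, aeval_X, map_one, hsq, Algebra.smul_def]
  rw [mul_pow, ← Nat.sub_add_cancel hi, pow_add, Nat.add_sub_cancel]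
  ring

theorem joukowski_X_sub_two_pow (m : ℕ) :
    joukowski m ((X - 2 : R[X]) ^ m) = (X - 1) ^ (2 * m) := by
  have hC : (C (-2) : R[X]) = -2 := by rw [map_neg, map_ofNat]
  have hsq : (X - 1 : R[X]) ^ 2 = (X ^ 2 + 1) + C (-2) * X := by rw [hC]; ring
  rw [pow_mul, hsq, add_pow, joukowski, show (X - 2 : R[X]) = X + C (-2) by rw [hC]; ring]
  refine sum_congr rfl fun j _ ↦ ?_
  rw [coeff_X_add_C_pow, mul_pow, C_mul, C_pow, C_eq_natCast]
  ring

end Joukowski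

end Polynomial

section RootsOfUnity

variable {K : Type*} [Field K] {ζ : K}

theorem IsPrimitiveRoot.aeval_add_inv_one_add_sum_dickson {R : Type*} [CommRing R]
    [Algebra R K] {m : ℕ} (hζ : IsPrimitiveRoot ζ (2 * m + 1)) (hm : m ≠ 0) :
    aeval (ζ + ζ⁻¹) (1 + ∑ k ∈ range m, dickson 1 (1 : R) (k + 1)) = 0 := by
  have hζ0 : ζ ≠ 0 := hζ.ne_zero (by omega)
  have hdickson (n : ℕ) : aeval (ζ + ζ⁻¹) (dickson 1 (1 : R) n) = ζ ^ n + ζ⁻¹ ^ n := by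
    rw [aeval_def, ← eval_map, map_dickson, map_one,
      dickson_one_one_eval_add_inv _ _ (mul_inv_cancel₀ hζ0)]
  have hgeom := pow_mul_one_add_sum_pow_add_inv_pow hζ0 m
  rw [hζ.geom_sum_eq_zero (by omega)] at hgeom
  simp only [map_add, map_one, map_sum, hdickson]
  exact (mul_eq_zero.mp hgeom).resolve_left (pow_ne_zero m hζ0)

theorem IsPrimitiveRoot.natDegree_minpoly_add_inv_le [CharZero K] {m : ℕ}
    (hζ : IsPrimitiveRoot ζ (2 * m + 1)) (hm : m ≠ 0) :
    (minpoly ℚ (ζ + ζ⁻¹)).natDegree ≤ m := by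
  set g : ℚ[X] := 1 + ∑ k ∈ range m, dickson 1 1 (k + 1)
  have hg : g ≠ 0 := by
    have hdickson (n : ℕ) : (dickson 1 (1 : ℚ) n).eval 2 = 2 := by
      simpa [one_add_one_eq_two] using dickson_one_one_eval_add_inv (1 : ℚ) 1 (one_mul 1) n
    intro h
    have h2 := congrArg (eval 2) h
    simp only [g, eval_add, eval_one, eval_finsetSum, hdickson, sum_const, card_range,
      nsmul_eq_mul, eval_zero] at h2
    have : (0 : ℚ) < 1 + m * 2 := by positivity
    linarith
  have hg_deg : g.natDegree ≤ m := by
    refine (natDegree_add_le _ _).trans (max_le (by simp) ?_)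
    exact natDegree_sum_le_of_forall_le _ _ fun k hk ↦
      (natDegree_dickson_le 1 1 (k + 1)).trans (mem_range.mp hk)
  exact (natDegree_le_of_dvd (minpoly.dvd ℚ _ (hζ.aeval_add_inv_one_add_sum_dickson hm)) hg).trans
    hg_deg

theorem IsPrimitiveRoot.cyclotomic_dvd_joukowski [CharZero K] {n : ℕ} (hζ : IsPrimitiveRoot ζ n)
    (hn : 0 < n) {f : ℤ[X]} (hf : aeval (ζ + ζ⁻¹) f = 0) :
    cyclotomic n ℤ ∣ joukowski f.natDegree f := by
  rw [cyclotomic_eq_minpoly hζ hn]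
  refine minpoly.isIntegrallyClosed_dvd (hζ.isIntegral hn) ?_
  rw [aeval_joukowski (hζ.ne_zero hn.ne') le_rfl, hf, mul_zero]

theorem IsPrimitiveRoot.joukowski_eq_cyclotomic [CharZero K] {p m : ℕ} (hp : p.Prime)
    (hpm : p = 2 * m + 1) (hζ : IsPrimitiveRoot ζ p) {f : ℤ[X]} (hmonic : f.Monic)
    (hf : f.map (Int.castRingHom ℚ) = minpoly ℚ (ζ + ζ⁻¹)) :
    f.natDegree = m ∧ joukowski m f = cyclotomic p ℤ := by
  subst hpm
  have hfζ : aeval (ζ + ζ⁻¹) f = 0 := by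
    rw [← aeval_map_algebraMap ℚ, algebraMap_int_eq, hf, minpoly.aeval]
  have hle : f.natDegree ≤ m := by
    rw [← hmonic.natDegree_map (Int.castRingHom ℚ), hf]
    exact hζ.natDegree_minpoly_add_inv_le (by rintro rfl; exact Nat.not_prime_one hp)
  have hdvd := hζ.cyclotomic_dvd_joukowski hp.pos hfζ
  have hcyc_deg : (cyclotomic (2 * m + 1) ℤ).natDegree = 2 * m := by
    rw [natDegree_cyclotomic, Nat.totient_prime hp, Nat.add_sub_cancel]
  have hge := natDegree_le_of_dvd hdvd hmonic.joukowski.ne_zero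
  rw [hmonic.natDegree_joukowski, hcyc_deg] at hge
  have hdeg : f.natDegree = m := by omega
  have heq := eq_of_monic_of_dvd_of_natDegree_le (cyclotomic.monic _ ℤ) hmonic.joukowski hdvd
    (by rw [hmonic.natDegree_joukowski, hcyc_deg, hdeg])
  exact ⟨hdeg, hdeg ▸ heq⟩

end RootsOfUnity

theorem map_zmod_eq_X_sub_two_pow_of_joukowski_eq_cyclotomic {p m : ℕ} [Fact p.Prime]
    (hpm : p = 2 * m + 1) {f : ℤ[X]} (hdeg : f.natDegree ≤ m)
    (hf : joukowski m f = cyclotomic p ℤ) :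
    f.map (Int.castRingHom (ZMod p)) = (X - 2) ^ m := by
  refine eq_of_joukowski_eq (natDegree_map_le.trans hdeg) ?_ ?_
  · have hlin : (X - 2 : (ZMod p)[X]).natDegree ≤ 1 := by
      rw [← C_ofNat]
      exact natDegree_X_sub_C_le 2
    simpa using natDegree_pow_le_of_le m hlin
  rw [← map_joukowski, hf, map_cyclotomic, cyclotomic_prime_eq_X_sub_one_pow,
    show p - 1 = 2 * m by omega, joukowski_X_sub_two_pow]

theorem stmt5 (p : ℕ) (hp : p.Prime) (hodd : Odd p)
    (f : Polynomial ℤ) (hmonic : f.Monic)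
    (hf : f.map (Int.castRingHom ℚ) = minpoly ℚ (2 * Complex.cos (2 * Real.pi / p))) :
    f.map (Int.castRingHom (ZMod p)) = (Polynomial.X - 2) ^ ((p - 1) / 2) ∧
    (5 ≤ p → ¬ (f.map (Int.castRingHom (ZMod p))).Separable) := by
  have := Fact.mk hp
  obtain ⟨m, hpm⟩ := hodd
  set ζ := Complex.exp (2 * Real.pi * Complex.I / p)
  have hζ : IsPrimitiveRoot ζ p := Complex.isPrimitiveRoot_exp p hp.ne_zero
  have hcos : 2 * Complex.cos (2 * Real.pi / p) = ζ + ζ⁻¹ := by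
    simp only [ζ, Complex.cos, ← Complex.exp_neg]
    ring_nf
  rw [hcos] at hf
  obtain ⟨hdeg, hcyc⟩ := hζ.joukowski_eq_cyclotomic hp hpm hmonic hf
  have hF := map_zmod_eq_X_sub_two_pow_of_joukowski_eq_cyclotomic hpm hdeg.le hcyc
  rw [show (p - 1) / 2 = m by omega]
  refine ⟨hF, fun hp5 hsep ↦ ?_⟩
  rw [hF, ← C_ofNat] at hsep
  have := (hsep.of_pow (not_isUnit_X_sub_C 2) (by omega)).2
  omega
end

section
/- For every (x, y, z) ∈ ℂ³ satisfying x² + y² + z² − xyz − 4 = 0, there exist nonzero complex numbers a, b with x = a + a⁻¹, y = b + b⁻¹, and z = ab + (ab)⁻¹. -/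
/-!
Over an algebraically closed field every `x` is `a + a⁻¹` for a root `a` of `X² - xX + 1`.
With `x = a + a⁻¹` and `y = b + b⁻¹`, the polynomial `x² + y² + z² - xyz - 4` factors as
`(z - (ab + (ab)⁻¹)) (z - (ab⁻¹ + (ab⁻¹)⁻¹))`, so `z` is one of these two values; in the second
case replace `b` by `b⁻¹`, which does not change `y`.
-/

open Polynomial in
theorem IsAlgClosed.exists_eq_add_inv {K : Type*} [Field K] [IsAlgClosed K] (x : K) :
    ∃ a : K, a ≠ 0 ∧ x = a + a⁻¹ := by
  have hdeg : (X ^ 2 - C x * X + 1 : K[X]).degree = 2 := by compute_degree!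
  obtain ⟨a, ha⟩ := IsAlgClosed.exists_root (X ^ 2 - C x * X + 1 : K[X]) (by simp [hdeg])
  have hroot : a * a + 1 = x * a := by
    simp only [IsRoot, eval_add, eval_sub, eval_mul, eval_pow, eval_X, eval_C, eval_one] at ha
    linear_combination ha
  have ha0 : a ≠ 0 := by
    rintro rfl
    simp at hroot
  refine ⟨a, ha0, ?_⟩
  field_simp
  linear_combination -hroot

theorem add_inv_sq_add_add_inv_sq_eq_mul {K : Type*} [Field K] {a b : K} (ha : a ≠ 0)
    (hb : b ≠ 0) (z : K) :
    (a + a⁻¹) ^ 2 + (b + b⁻¹) ^ 2 + z ^ 2 - (a + a⁻¹) * (b + b⁻¹) * z - 4 =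
      (z - (a * b + (a * b)⁻¹)) * (z - (a * b⁻¹ + (a * b⁻¹)⁻¹)) := by
  field_simp
  ring

theorem stmt8 (x y z : ℂ) (h : x ^ 2 + y ^ 2 + z ^ 2 - x * y * z - 4 = 0) :
    ∃ a b : ℂ, a ≠ 0 ∧ b ≠ 0 ∧ x = a + a⁻¹ ∧ y = b + b⁻¹ ∧ z = a * b + (a * b)⁻¹ := by
  obtain ⟨a, ha, rfl⟩ := IsAlgClosed.exists_eq_add_inv x
  obtain ⟨b, hb, rfl⟩ := IsAlgClosed.exists_eq_add_inv y
  rw [add_inv_sq_add_add_inv_sq_eq_mul ha hb, mul_eq_zero, sub_eq_zero, sub_eq_zero] at h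
  rcases h with hz | hz
  · exact ⟨a, b, ha, hb, rfl, rfl, hz⟩
  · exact ⟨a, b⁻¹, ha, inv_ne_zero hb, rfl, by rw [inv_inv, add_comm], hz⟩
end

section
/- Let X, Y ∈ SL₂(ℂ) and set w = Y X⁻¹ Y X Y⁻¹ X Y X⁻¹ Y. If X w = w X and the pair (X, Y) generates an irreducible subgroup (no common eigenvector), then with α = tr(X), β = tr(Y), γ = tr(X⁻¹Y), the equation −γ⁴ + αβγ³ − (α² + β² − 3)γ² + αβγ − 1 = 0 holds. -/
/-!
Over `ℂ`, `X` has an eigenvector `u` and `Y` an eigenvector `v`; irreducibility makes them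
linearly independent, so conjugating by an element of `SL₂(ℂ)` with columns proportional to
`u, v` makes `X = !![a, x; 0, a⁻¹]` upper and `Y = !![p, 0; q, p⁻¹]` lower triangular, and
`x q ≠ 0` since otherwise a standard basis vector would be a common eigenvector. In this normal
form the `(0, 0)` entry of `X w - w X` is exactly `x q` times the trace polynomial, and all the
traces involved are conjugation invariant.
-/

open Matrix
open scoped MatrixGroups

/-- The word `w` of the presentation `⟨μ, ν ∣ μ w = w μ⟩` of the 6²₂ link group. -/
def linkWord {G : Type*} [Group G] (x y : G) : G :=
  y * x⁻¹ * y * x * y⁻¹ * x * y * x⁻¹ * y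

theorem linkWord_conj {G : Type*} [Group G] (g x y : G) :
    linkWord (g⁻¹ * x * g) (g⁻¹ * y * g) = g⁻¹ * linkWord x y * g := by
  simp only [linkWord]
  group

def linkTracePoly {K : Type*} [CommRing K] (α β γ : K) : K :=
  -γ ^ 4 + α * β * γ ^ 3 - (α ^ 2 + β ^ 2 - 3) * γ ^ 2 + α * β * γ - 1

def HasCommonEigenvector {K n : Type*} [CommRing K] [Fintype n] (A B : Matrix n n K) : Prop :=
  ∃ v : n → K, v ≠ 0 ∧ (∃ c : K, A *ᵥ v = c • v) ∧ (∃ c : K, B *ᵥ v = c • v)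

namespace Matrix.SpecialLinearGroup

variable {K n : Type*} [CommRing K] [Fintype n] [DecidableEq n]

theorem trace_conj (P X : SpecialLinearGroup n K) :
    trace (↑(P⁻¹ * X * P) : Matrix n n K) = trace (X : Matrix n n K) := by
  rw [coe_mul, trace_mul_comm, ← coe_mul, mul_inv_cancel_left]

theorem conj_mulVec (P X : SpecialLinearGroup n K) (v : n → K) :
    (↑(P⁻¹ * X * P) : Matrix n n K) *ᵥ v = ↑P⁻¹ *ᵥ ((X : Matrix n n K) *ᵥ (↑P *ᵥ v)) := by
  rw [coe_mul, coe_mul, mulVec_mulVec, mulVec_mulVec, Matrix.mul_assoc]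

theorem inv_mulVec_mulVec (P : SpecialLinearGroup n K) (v : n → K) :
    (↑P⁻¹ : Matrix n n K) *ᵥ (↑P *ᵥ v) = v := by
  rw [mulVec_mulVec, ← coe_mul, inv_mul_cancel, coe_one, one_mulVec]

theorem hasCommonEigenvector_of_conj {P X Y : SpecialLinearGroup n K}
    (h : HasCommonEigenvector (↑(P⁻¹ * X * P) : Matrix n n K) ↑(P⁻¹ * Y * P)) :
    HasCommonEigenvector (X : Matrix n n K) Y := by
  obtain ⟨v, hv, ⟨a, ha⟩, ⟨b, hb⟩⟩ := h
  have eigen_of_conj {Z : SpecialLinearGroup n K} {c : K}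
      (hc : (↑(P⁻¹ * Z * P) : Matrix n n K) *ᵥ v = c • v) :
      (Z : Matrix n n K) *ᵥ (↑P *ᵥ v) = c • ((P : Matrix n n K) *ᵥ v) := by
    rw [conj_mulVec] at hc
    rw [← inv_mulVec_mulVec P⁻¹ ((Z : Matrix n n K) *ᵥ (↑P *ᵥ v)), inv_inv, hc, mulVec_smul]
  refine ⟨(P : Matrix n n K) *ᵥ v, fun h0 => hv ?_, ⟨a, eigen_of_conj ha⟩, ⟨b, eigen_of_conj hb⟩⟩
  rw [← inv_mulVec_mulVec P v, h0, mulVec_zero]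

theorem conj_apply_eq_zero {P X : SpecialLinearGroup n K} {j : n} {c : K}
    (hv : (X : Matrix n n K) *ᵥ (↑P *ᵥ Pi.single j 1) = c • (↑P *ᵥ Pi.single j 1))
    {i : n} (hij : i ≠ j) : (P⁻¹ * X * P) i j = 0 := by
  have hcol := congrFun (conj_mulVec P X (Pi.single j 1)) i
  rw [hv, mulVec_smul, inv_mulVec_mulVec, mulVec_single_one] at hcol
  simpa [hij] using hcol

end Matrix.SpecialLinearGroup

theorem hasCommonEigenvector_of_col_eq_zero {K n : Type*} [CommRing K] [Nontrivial K] [Fintype n]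
    [DecidableEq n] {A B : Matrix n n K} (j : n)
    (hA : ∀ i, i ≠ j → A i j = 0) (hB : ∀ i, i ≠ j → B i j = 0) :
    HasCommonEigenvector A B := by
  have single_eigen {M : Matrix n n K} (hM : ∀ i, i ≠ j → M i j = 0) :
      M *ᵥ Pi.single j 1 = M j j • Pi.single j 1 := by
    ext i
    by_cases hij : i = j
    · subst hij; simp
    · simp [hij, hM i hij]
  exact ⟨Pi.single j 1, by simp, ⟨_, single_eigen hA⟩, ⟨_, single_eigen hB⟩⟩

section Field

variable {K : Type*} [Field K]

theorem exists_mulVec_eq_smul {n : Type*} [Fintype n] [DecidableEq n] [Nonempty n]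
    [IsAlgClosed K] (A : Matrix n n K) : ∃ v : n → K, v ≠ 0 ∧ ∃ c : K, A *ᵥ v = c • v := by
  obtain ⟨c, hc⟩ := Module.End.exists_eigenvalue (toLin' A)
  obtain ⟨v, hv⟩ := hc.exists_hasEigenvector
  exact ⟨v, hv.2, c, by simpa using hv.apply_eq_smul⟩

theorem linearIndependent_of_not_hasCommonEigenvector {n : Type*} [Fintype n]
    {A B : Matrix n n K} (h : ¬ HasCommonEigenvector A B) {u v : n → K} (hu : u ≠ 0) (hv : v ≠ 0)
    {a b : K} (hAu : A *ᵥ u = a • u) (hBv : B *ᵥ v = b • v) : LinearIndependent K ![u, v] := by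
  refine (LinearIndependent.pair_iff' hu).2 fun t ht => h ⟨u, hu, ⟨a, hAu⟩, ⟨b, ?_⟩⟩
  have ht0 : t ≠ 0 := by rintro rfl; exact hv (by rw [← ht, zero_smul])
  apply smul_right_injective _ ht0
  dsimp only
  rw [← mulVec_smul, ht, hBv, ← ht, smul_comm]

theorem exists_SL2_mulVec_single {u v : Fin 2 → K} (h : LinearIndependent K ![u, v]) :
    ∃ (P : SL(2, K)) (s : K), (P : Matrix (Fin 2) (Fin 2) K) *ᵥ Pi.single 0 1 = u ∧
      (P : Matrix (Fin 2) (Fin 2) K) *ᵥ Pi.single 1 1 = s • v := by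
  have hdet : u 0 * v 1 - u 1 * v 0 ≠ 0 := by
    have hM := (linearIndependent_rows_iff_isUnit (A := of ![u, v])).1 h
    simpa [det_fin_two] using ((isUnit_iff_isUnit_det _).1 hM).ne_zero
  refine ⟨⟨!![u 0, (u 0 * v 1 - u 1 * v 0)⁻¹ * v 0; u 1, (u 0 * v 1 - u 1 * v 0)⁻¹ * v 1], ?_⟩,
    (u 0 * v 1 - u 1 * v 0)⁻¹, ?_, ?_⟩
  · rw [det_fin_two_of]
    field_simp
  all_goals ext i; fin_cases i <;> simp

theorem exists_conj_triangular [IsAlgClosed K] {X Y : SL(2, K)}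
    (h : ¬ HasCommonEigenvector (X : Matrix (Fin 2) (Fin 2) K) Y) :
    ∃ P : SL(2, K), (P⁻¹ * X * P) 1 0 = 0 ∧ (P⁻¹ * X * P) 0 1 ≠ 0 ∧
      (P⁻¹ * Y * P) 0 1 = 0 ∧ (P⁻¹ * Y * P) 1 0 ≠ 0 := by
  obtain ⟨u, hu, a, hXu⟩ := exists_mulVec_eq_smul (X : Matrix (Fin 2) (Fin 2) K)
  obtain ⟨v, hv, b, hYv⟩ := exists_mulVec_eq_smul (Y : Matrix (Fin 2) (Fin 2) K)
  obtain ⟨P, s, hP0, hP1⟩ :=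
    exists_SL2_mulVec_single (linearIndependent_of_not_hasCommonEigenvector h hu hv hXu hYv)
  have hX10 : (P⁻¹ * X * P) 1 0 = 0 :=
    Matrix.SpecialLinearGroup.conj_apply_eq_zero (c := a) (by rw [hP0, hXu]) (by decide)
  have hY01 : (P⁻¹ * Y * P) 0 1 = 0 :=
    Matrix.SpecialLinearGroup.conj_apply_eq_zero (c := b)
      (by rw [hP1, mulVec_smul, hYv, smul_comm]) (by decide)
  have hconj : ¬ HasCommonEigenvector (↑(P⁻¹ * X * P) : Matrix (Fin 2) (Fin 2) K) ↑(P⁻¹ * Y * P) :=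
    fun h' => h (Matrix.SpecialLinearGroup.hasCommonEigenvector_of_conj h')
  refine ⟨P, hX10, fun hX01 => hconj (hasCommonEigenvector_of_col_eq_zero 1 ?_ ?_), hY01,
    fun hY10 => hconj (hasCommonEigenvector_of_col_eq_zero 0 ?_ ?_)⟩ <;>
  · intro i hi
    fin_cases i <;> first | exact absurd rfl hi | assumption

namespace Matrix.SpecialLinearGroup

theorem coe_eq_of_apply_one_zero_eq_zero {A : SL(2, K)} (h : A 1 0 = 0) :
    A 0 0 ≠ 0 ∧ (A : Matrix (Fin 2) (Fin 2) K) = !![A 0 0, A 0 1; 0, (A 0 0)⁻¹] ∧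
      (↑A⁻¹ : Matrix (Fin 2) (Fin 2) K) = !![(A 0 0)⁻¹, -A 0 1; 0, A 0 0] := by
  have hdet := A.det_coe
  rw [det_fin_two, h, mul_zero, sub_zero] at hdet
  have hd : A 1 1 = (A 0 0)⁻¹ := eq_inv_of_mul_eq_one_right hdet
  refine ⟨left_ne_zero_of_mul_eq_one hdet, ?_, ?_⟩
  · rw [← hd, ← h]
    exact eta_fin_two _
  · rw [coe_inv, adjugate_fin_two, hd, h, neg_zero]

theorem coe_eq_of_apply_zero_one_eq_zero {A : SL(2, K)} (h : A 0 1 = 0) :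
    A 0 0 ≠ 0 ∧ (A : Matrix (Fin 2) (Fin 2) K) = !![A 0 0, 0; A 1 0, (A 0 0)⁻¹] ∧
      (↑A⁻¹ : Matrix (Fin 2) (Fin 2) K) = !![(A 0 0)⁻¹, 0; -A 1 0, A 0 0] := by
  have hdet := A.det_coe
  rw [det_fin_two, h, zero_mul, sub_zero] at hdet
  have hd : A 1 1 = (A 0 0)⁻¹ := eq_inv_of_mul_eq_one_right hdet
  refine ⟨left_ne_zero_of_mul_eq_one hdet, ?_, ?_⟩
  · rw [← hd, ← h]
    exact eta_fin_two _
  · rw [coe_inv, adjugate_fin_two, hd, h, neg_zero]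

end Matrix.SpecialLinearGroup

theorem linkWord_commutator_apply_zero_zero_of_triangular (a x p q : K) (ha : a ≠ 0)
    (hp : p ≠ 0) :
    let A := !![a, x; 0, a⁻¹]
    let A' := !![a⁻¹, -x; 0, a]
    let B := !![p, 0; q, p⁻¹]
    let B' := !![p⁻¹, 0; -q, p]
    let W := B * A' * B * A * B' * A * B * A' * B
    (A * W) 0 0 - (W * A) 0 0 =
      x * q * linkTracePoly (a + a⁻¹) (p + p⁻¹) (a⁻¹ * p + a * p⁻¹ - x * q) := by
  simp only [mul_fin_two, of_apply, cons_val', cons_val_zero, empty_val', cons_val_fin_one,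
    linkTracePoly]
  field_simp
  ring

theorem linkTracePoly_eq_zero_of_triangular {A B : SL(2, K)} (hA10 : A 1 0 = 0)
    (hA01 : A 0 1 ≠ 0) (hB01 : B 0 1 = 0) (hB10 : B 1 0 ≠ 0) (h : Commute A (linkWord A B)) :
    linkTracePoly (trace (A : Matrix (Fin 2) (Fin 2) K)) (trace (B : Matrix (Fin 2) (Fin 2) K))
      (trace (↑(A⁻¹ * B) : Matrix (Fin 2) (Fin 2) K)) = 0 := by
  obtain ⟨ha, hA, hA'⟩ := Matrix.SpecialLinearGroup.coe_eq_of_apply_one_zero_eq_zero hA10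
  obtain ⟨hp, hB, hB'⟩ := Matrix.SpecialLinearGroup.coe_eq_of_apply_zero_one_eq_zero hB01
  have hE : (↑(A * linkWord A B) : Matrix (Fin 2) (Fin 2) K) 0 0 =
      (↑(linkWord A B * A) : Matrix (Fin 2) (Fin 2) K) 0 0 := by
    rw [h.eq]
  simp only [linkWord, Matrix.SpecialLinearGroup.coe_mul] at hE
  rw [hA, hA', hB, hB'] at hE
  have key :=
    linkWord_commutator_apply_zero_zero_of_triangular (A 0 0) (A 0 1) (B 0 0) (B 1 0) ha hp
  dsimp only at key
  rw [hE, sub_self, eq_comm] at key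
  have htrA : trace (A : Matrix (Fin 2) (Fin 2) K) = A 0 0 + (A 0 0)⁻¹ := by
    conv_lhs => rw [hA, trace_fin_two_of]
  have htrB : trace (B : Matrix (Fin 2) (Fin 2) K) = B 0 0 + (B 0 0)⁻¹ := by
    conv_lhs => rw [hB, trace_fin_two_of]
  have htrAB : trace (↑(A⁻¹ * B) : Matrix (Fin 2) (Fin 2) K) =
      (A 0 0)⁻¹ * B 0 0 + A 0 0 * (B 0 0)⁻¹ - A 0 1 * B 1 0 := by
    conv_lhs => rw [Matrix.SpecialLinearGroup.coe_mul, hA', hB, mul_fin_two, trace_fin_two_of]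
    ring
  rw [htrA, htrB, htrAB]
  exact (mul_eq_zero.1 key).resolve_left (mul_ne_zero hA01 hB10)

end Field

theorem stmt14 (X Y : Matrix.SpecialLinearGroup (Fin 2) ℂ)
    (w : Matrix.SpecialLinearGroup (Fin 2) ℂ)
    (hw : w = Y * X⁻¹ * Y * X * Y⁻¹ * X * Y * X⁻¹ * Y)
    (hcomm : X * w = w * X)
    (hirr : ¬ ∃ v : Fin 2 → ℂ, v ≠ 0 ∧
      (∃ c : ℂ, Matrix.mulVec (X : Matrix (Fin 2) (Fin 2) ℂ) v = c • v) ∧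
      (∃ c : ℂ, Matrix.mulVec (Y : Matrix (Fin 2) (Fin 2) ℂ) v = c • v))
    (α β γ : ℂ)
    (hα : α = Matrix.trace (X : Matrix (Fin 2) (Fin 2) ℂ))
    (hβ : β = Matrix.trace (Y : Matrix (Fin 2) (Fin 2) ℂ))
    (hγ : γ = Matrix.trace ((X⁻¹ * Y : Matrix.SpecialLinearGroup (Fin 2) ℂ) : Matrix (Fin 2) (Fin 2) ℂ)) :
    -γ ^ 4 + α * β * γ ^ 3 - (α ^ 2 + β ^ 2 - 3) * γ ^ 2 + α * β * γ - 1 = 0 := by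
  subst hw hα hβ hγ
  obtain ⟨P, hA10, hA01, hB01, hB10⟩ := exists_conj_triangular hirr
  have hconj : Commute (P⁻¹ * X * P) (linkWord (P⁻¹ * X * P) (P⁻¹ * Y * P)) := by
    rw [linkWord_conj]
    simpa only [MulAut.conj_apply, inv_inv] using
      Commute.map (show Commute X (linkWord X Y) from hcomm) (MulAut.conj P⁻¹)
  have h := linkTracePoly_eq_zero_of_triangular hA10 hA01 hB01 hB10 hconj
  rwa [Matrix.SpecialLinearGroup.trace_conj, Matrix.SpecialLinearGroup.trace_conj,
    show (P⁻¹ * X * P)⁻¹ * (P⁻¹ * Y * P) = P⁻¹ * (X⁻¹ * Y) * P by group,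
    Matrix.SpecialLinearGroup.trace_conj] at h
end
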